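/- arXiv:1207.1638 — 8 statements merged into one kernel-verified Lean document; each statement's English description precedes it below -/
import Mathlib

section
/- A finite semigroup S is not Malcev nilpotent if and only if there exists a positive integer m, distinct elements x, y in S, and elements w_1, ..., w_m in S^1 such that x = λ_m(x, y, w_1, ..., w_m) and y = ρ_m(x, y, w_1, ..., w_m). -/
/-- The Malcev sequences: `(malcevLR x y z n).1 = λ_n`, `(malcevLR x y z n).2 = ρ_n`,
with `λ_0 = x`, `ρ_0 = y`, `λ_{k+1} = λ_k z_k ρ_k`, `ρ_{k+1} = ρ_k z_k λ_k`. -/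
def malcevLR {α : Type*} [Mul α] (x y : α) (z : ℕ → α) : ℕ → α × α
  | 0 => (x, y)
  | n+1 => ((malcevLR x y z n).1 * z n * (malcevLR x y z n).2,
            (malcevLR x y z n).2 * z n * (malcevLR x y z n).1)

/-- A semigroup is Malcev nilpotent of class at most `n` if `λ_n = ρ_n` identically,
with the interlacing elements taken from `S¹ = WithOne S`. -/
def MalcevClassLe (S : Type*) [Semigroup S] (n : ℕ) : Prop :=
  ∀ (a b : S) (c : ℕ → WithOne S),
    (malcevLR (a : WithOne S) (b : WithOne S) c n).1 =
    (malcevLR (a : WithOne S) (b : WithOne S) c n).2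

/-- Malcev nilpotency. -/
def MalcevNilpotent (S : Type*) [Semigroup S] : Prop :=
  ∃ n, 1 ≤ n ∧ MalcevClassLe S n

/-- A (two-sided, nonempty) ideal of a semigroup. -/
def IsIdeal {S : Type*} [Mul S] (I : Set S) : Prop :=
  I.Nonempty ∧ ∀ s x, x ∈ I → s * x ∈ I ∧ x * s ∈ I

/-- The Rees congruence associated to an ideal: identify all elements of `I`. -/
def reesCon {S : Type*} [Semigroup S] (I : Set S) (hI : IsIdeal I) : Con S where
  r x y := x = y ∨ (x ∈ I ∧ y ∈ I)
  iseqv := ⟨fun _ => Or.inl rfl,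
    fun h => h.elim (fun h => Or.inl h.symm) (fun h => Or.inr ⟨h.2, h.1⟩),
    fun h₁ h₂ => by
      rcases h₁ with h₁ | h₁
      · rwa [h₁]
      · rcases h₂ with h₂ | h₂
        · exact Or.inr ⟨h₁.1, h₂ ▸ h₁.2⟩
        · exact Or.inr ⟨h₁.1, h₂.2⟩⟩
  mul' := by
    intro a b c d h₁ h₂
    rcases h₁ with h₁ | h₁
    · rcases h₂ with h₂ | h₂
      · exact Or.inl (by rw [h₁, h₂])
      · exact Or.inr ⟨(hI.2 a c h₂.1).1, h₁ ▸ (hI.2 b d h₂.2).1⟩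
    · exact Or.inr ⟨(hI.2 c a h₁.1).2, (hI.2 d b h₁.2).2⟩

/-- `S` is minimal non-nilpotent: not Malcev nilpotent, but every proper subsemigroup and
every proper Rees factor semigroup is Malcev nilpotent. -/
def MinimalNonNilpotent (S : Type*) [Semigroup S] : Prop :=
  ¬ MalcevNilpotent S ∧
  (∀ T : Subsemigroup S, T ≠ ⊤ → MalcevNilpotent T) ∧
  (∀ (I : Set S) (hI : IsIdeal I), I.Nontrivial →
    MalcevNilpotent (reesCon I hI).Quotient)

/-- `θ` together with the injective family `E g i j ↔ (g; i, j)` realizes a copy of the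
inverse Rees matrix semigroup `M⁰(G, n, n; I_n)` as an ideal of `S`. -/
def IsReesIdeal {S : Type*} [Semigroup S] {G : Type*} [Group G] {n : ℕ}
    (θ : S) (E : G → Fin n → Fin n → S) : Prop :=
  (∀ s : S, s * θ = θ ∧ θ * s = θ) ∧
  Function.Injective (fun p : G × Fin n × Fin n => E p.1 p.2.1 p.2.2) ∧
  (θ ∉ Set.range fun p : G × Fin n × Fin n => E p.1 p.2.1 p.2.2) ∧
  (∀ g h i j k l, E g i j * E h k l = if j = k then E (g * h) i l else θ) ∧
  (∀ (s : S) g i j,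
    (s * E g i j = θ ∨ ∃ g' i' j', s * E g i j = E g' i' j') ∧
    (E g i j * s = θ ∨ ∃ g' i' j', E g i j * s = E g' i' j'))

/-- The underlying set of the Rees ideal `M = E(G × n × n) ∪ {θ}`. -/
def reesIdealSet {S : Type*} {G : Type*} {n : ℕ} (θ : S) (E : G → Fin n → Fin n → S) :
    Set S :=
  (Set.range fun p : G × Fin n × Fin n => E p.1 p.2.1 p.2.2) ∪ {θ}

lemma malcevLR_add {α : Type*} [Mul α] (x y : α) (z : ℕ → α) (k n : ℕ) :
    malcevLR x y z (k + n) =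
      malcevLR (malcevLR x y z k).1 (malcevLR x y z k).2 (fun i => z (k + i)) n := by
  induction n with
  | zero => rfl
  | succ n ih =>
    show malcevLR x y z ((k + n) + 1) = _
    simp [malcevLR, ih]

lemma malcevLR_congr {α : Type*} [Mul α] (x y : α) (z z' : ℕ → α) (n : ℕ)
    (h : ∀ i < n, z i = z' i) : malcevLR x y z n = malcevLR x y z' n := by
  induction n with
  | zero => rfl
  | succ n ih =>
    have h1 := ih (fun i hi => h i (Nat.lt_succ_of_lt hi))
    simp [malcevLR, h1, h n (Nat.lt_succ_self n)]

lemma coe_mul_exists {S : Type*} [Semigroup S] (a : S) (u : WithOne S) :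
    ∃ b : S, (a : WithOne S) * u = (b : WithOne S) := by
  by_cases hu : u = 1
  · exact ⟨a, by simp [hu]⟩
  · obtain ⟨c, rfl⟩ := WithOne.ne_one_iff_exists.1 hu
    exact ⟨a * c, by simp⟩

lemma malcevLR_coe {S : Type*} [Semigroup S] (x y : S) (c : ℕ → WithOne S) (n : ℕ) :
    ∃ a b : S, (malcevLR (x : WithOne S) (y : WithOne S) c n).1 = (a : WithOne S) ∧
      (malcevLR (x : WithOne S) (y : WithOne S) c n).2 = (b : WithOne S) := by
  induction n with
  | zero => exact ⟨x, y, rfl, rfl⟩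
  | succ n ih =>
    obtain ⟨a, b, ha, hb⟩ := ih
    obtain ⟨d, hd⟩ := coe_mul_exists a (c n)
    obtain ⟨e, he⟩ := coe_mul_exists b (c n)
    exact ⟨d * b, e * a, by simp [malcevLR, ha, hb, hd], by simp [malcevLR, ha, hb, he]⟩

lemma malcevLR_eq_propagates {α : Type*} [Mul α] (x y : α) (z : ℕ → α) (k : ℕ)
    (h : (malcevLR x y z k).1 = (malcevLR x y z k).2) :
    ∀ n, k ≤ n → (malcevLR x y z n).1 = (malcevLR x y z n).2 := by
  intro n hkn
  obtain ⟨j, rfl⟩ := Nat.exists_eq_add_of_le hkn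
  induction j with
  | zero => exact h
  | succ j ih =>
    show (malcevLR x y z ((k + j) + 1)).1 = _
    simp [malcevLR, ih]


/-- A finite semigroup is not Malcev nilpotent iff there are `m ≥ 1`, distinct `x, y ∈ S`
and `w_1, …, w_m ∈ S¹` with `x = λ_m(x,y,w)` and `y = ρ_m(x,y,w)`. -/
theorem stmt_0 {S : Type*} [Semigroup S] [Finite S] :
    ¬ MalcevNilpotent S ↔
      ∃ m, 1 ≤ m ∧ ∃ x y : S, x ≠ y ∧ ∃ w : ℕ → WithOne S,
        (malcevLR (x : WithOne S) (y : WithOne S) w m).1 = (x : WithOne S) ∧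
        (malcevLR (x : WithOne S) (y : WithOne S) w m).2 = (y : WithOne S) := by
  constructor
  · intro hnn
    cases nonempty_fintype S
    have : Fintype (WithOne S) := inferInstanceAs (Fintype (Option S))
    set N := Fintype.card (WithOne S × WithOne S) with hN
    have hcls : ¬ MalcevClassLe S (N + 1) := fun h => hnn ⟨N + 1, Nat.le_add_left 1 N, h⟩
    simp only [MalcevClassLe, not_forall] at hcls
    obtain ⟨a, b, c, hne⟩ := hcls
    -- all intermediate pairs distinct
    have hall : ∀ k ≤ N + 1,
        (malcevLR (a : WithOne S) (b : WithOne S) c k).1 ≠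
        (malcevLR (a : WithOne S) (b : WithOne S) c k).2 := by
      intro k hk heq
      exact hne (malcevLR_eq_propagates _ _ _ k heq (N + 1) hk)
    -- pigeonhole on Fin (N+2)
    obtain ⟨i, j, hij, hmap⟩ := Fintype.exists_ne_map_eq_of_card_lt
      (fun k : Fin (N + 2) => malcevLR (a : WithOne S) (b : WithOne S) c k.1)
      (by simp [hN])
    wlog hlt : i < j generalizing i j
    · exact this j i hij.symm hmap.symm (lt_of_le_of_ne (not_lt.1 hlt) hij.symm)
    obtain ⟨x, y, hx, hy⟩ := malcevLR_coe a b c i.1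
    refine ⟨j.1 - i.1, by omega, x, y, ?_, fun t => c (i.1 + t), ?_, ?_⟩
    · intro hxy
      exact hall i.1 (by omega) (by rw [hx, hy, hxy])
    · have := malcevLR_add (a : WithOne S) (b : WithOne S) c i.1 (j.1 - i.1)
      rw [hx, hy] at this
      rw [← this, show i.1 + (j.1 - i.1) = j.1 by omega, ← hmap, hx]
    · have := malcevLR_add (a : WithOne S) (b : WithOne S) c i.1 (j.1 - i.1)
      rw [hx, hy] at this
      rw [← this, show i.1 + (j.1 - i.1) = j.1 by omega, ← hmap, hy]
  · rintro ⟨m, hm, x, y, hxy, w, hw1, hw2⟩ ⟨n, hn, hcls⟩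
    -- periodic extension
    set w' : ℕ → WithOne S := fun i => w (i % m) with hw'
    have hper : ∀ k, malcevLR (x : WithOne S) (y : WithOne S) w' (k * m) =
        ((x : WithOne S), (y : WithOne S)) := by
      intro k
      induction k with
      | zero => rw [Nat.zero_mul]; rfl
      | succ k ih =>
        rw [show (k + 1) * m = k * m + m by ring, malcevLR_add, ih]
        have : malcevLR (x : WithOne S) (y : WithOne S) (fun i => w' (k * m + i)) m =
            malcevLR (x : WithOne S) (y : WithOne S) w m := by
          apply malcevLR_congr
          intro i hi
          simp only [hw']
          rw [show k * m + i = i + k * m by ring, Nat.add_mul_mod_self_right,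
            Nat.mod_eq_of_lt hi]
        rw [this, Prod.ext_iff, hw1, hw2]
        exact ⟨rfl, rfl⟩
    -- choose k*m ≥ n, write k*m = r + n
    have hnm : n ≤ n * m := Nat.le_mul_of_pos_right n hm
    set r := n * m - n with hr
    have hrn : r + n = n * m := by omega
    obtain ⟨a, b, ha, hb⟩ := malcevLR_coe x y w' r
    have key := hcls a b (fun i => w' (r + i))
    have := malcevLR_add (x : WithOne S) (y : WithOne S) w' r n
    rw [ha, hb] at this
    rw [← this, hrn, hper n] at key
    exact hxy (WithOne.coe_inj.1 key)
end

section
/- If S is a semigroup with zero θ and I is an ideal of S such that I^n = {θ} for some n ≥ 1 and the Rees factor semigroup S/I is Malcev nilpotent, then S is Malcev nilpotent. -/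
/-!
Let `m` be the Malcev class of `S/I`. Projecting `λ_m` and `ρ_m` to `S/I` gives equal elements,
so either `λ_m = ρ_m` already in `S`, or both lie in `I`. In the second case each further step
`λ_{j+1} = λ_j c ρ_j` multiplies by one more factor from the ideal, so `λ_{m+n-1}` and
`ρ_{m+n-1}` lie in `I^n = {θ}` and are equal.
-/

open scoped Pointwise

section Malcev

variable {M : Type*}

theorem malcevLR_map [Mul M] {N F : Type*} [Mul N] [FunLike F M N] [MulHomClass F M N]
    (f : F) (x y : M) (z : ℕ → M) (k : ℕ) :
    malcevLR (f x) (f y) (f ∘ z) k = Prod.map f f (malcevLR x y z k) := by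
  induction k with
  | zero => rfl
  | succ k ih => simp [malcevLR, ih]

theorem malcevLR_fst_eq_snd_of_le [Mul M] {x y : M} {z : ℕ → M} {k l : ℕ}
    (h : (malcevLR x y z k).1 = (malcevLR x y z k).2) (hkl : k ≤ l) :
    (malcevLR x y z l).1 = (malcevLR x y z l).2 := by
  induction l, hkl using Nat.le_induction with
  | base => exact h
  | succ l _ ih => simp only [malcevLR, ih]

theorem IsIdeal.pow_succ_subset [Monoid M] {J : Set M} (hJ : IsIdeal J) (k : ℕ) :
    J ^ (k + 1) ⊆ J := by
  rw [pow_succ]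
  rintro _ ⟨p, -, q, hq, rfl⟩
  exact (hJ.2 p q hq).1

theorem IsIdeal.mul_mul_mem_pow_succ [Monoid M] {J : Set M} (hJ : IsIdeal J) {k : ℕ} {u v : M}
    (hu : u ∈ J ^ (k + 1)) (s : M) (hv : v ∈ J) : u * s * v ∈ J ^ (k + 2) := by
  rw [pow_succ] at hu
  obtain ⟨p, hp, q, hq, rfl⟩ := hu
  rw [pow_succ, pow_succ, mul_assoc p]
  exact Set.mul_mem_mul (Set.mul_mem_mul hp (hJ.2 s q hq).2) hv

theorem malcevLR_mem_pow [Monoid M] {J : Set M} (hJ : IsIdeal J) {x y : M} {z : ℕ → M} {m : ℕ}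
    (hx : (malcevLR x y z m).1 ∈ J) (hy : (malcevLR x y z m).2 ∈ J) (k : ℕ) :
    (malcevLR x y z (m + k)).1 ∈ J ^ (k + 1) ∧ (malcevLR x y z (m + k)).2 ∈ J ^ (k + 1) := by
  induction k with
  | zero => simpa using ⟨hx, hy⟩
  | succ k ih =>
    exact ⟨hJ.mul_mul_mem_pow_succ ih.1 _ (hJ.pow_succ_subset k ih.2),
      hJ.mul_mul_mem_pow_succ ih.2 _ (hJ.pow_succ_subset k ih.1)⟩

end Malcev

section WithOne

variable {S : Type*}

theorem IsIdeal.image_coe_withOne [Mul S] {I : Set S} (hI : IsIdeal I) :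
    IsIdeal ((↑) '' I : Set (WithOne S)) := by
  refine ⟨hI.1.image _, ?_⟩
  rintro s _ ⟨x, hx, rfl⟩
  induction s using WithOne.recOneCoe with
  | one => simpa using hx
  | coe s => exact ⟨⟨s * x, (hI.2 s x hx).1, rfl⟩, ⟨x * s, (hI.2 s x hx).2, rfl⟩⟩

theorem mapMulHom_reesCon_eq_iff [Semigroup S] {I : Set S} (hI : IsIdeal I) {x y : WithOne S} :
    WithOne.mapMulHom (reesCon I hI).mkMulHom x = WithOne.mapMulHom (reesCon I hI).mkMulHom y ↔
      x = y ∨ (x ∈ ((↑) '' I : Set (WithOne S)) ∧ y ∈ ((↑) '' I : Set (WithOne S))) := by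
  induction x using WithOne.recOneCoe <;> induction y using WithOne.recOneCoe <;>
    simp [Con.eq]
  exact Iff.rfl

theorem eq_of_mem_image_coe_pow [Semigroup S] {I : Set S} {n : ℕ} {θ : S}
    (hIn : ∀ f : Fin n → S, (∀ i, f i ∈ I) →
      (List.ofFn fun i => ((f i : S) : WithOne S)).prod = (θ : WithOne S))
    {x : WithOne S} (hx : x ∈ ((↑) '' I : Set (WithOne S)) ^ n) : x = θ := by
  obtain ⟨f, rfl⟩ := Set.mem_pow.1 hx
  choose g hgI hgf using fun i => (f i).2
  simpa only [hgf] using hIn g hgI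

end WithOne

theorem stmt_1_general {S : Type*} [Semigroup S] (θ : S)
    (I : Set S) (hI : IsIdeal I) (n : ℕ) (hn : 1 ≤ n)
    (hIn : ∀ f : Fin n → S, (∀ i, f i ∈ I) →
      (List.ofFn fun i => ((f i : S) : WithOne S)).prod = (θ : WithOne S))
    (hq : MalcevNilpotent (reesCon I hI).Quotient) :
    MalcevNilpotent S := by
  obtain ⟨m, hm, hQ⟩ := hq
  obtain ⟨k, rfl⟩ : ∃ k, n = k + 1 := ⟨n - 1, by omega⟩
  refine ⟨m + k, by omega, fun a b c => ?_⟩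
  set F := WithOne.mapMulHom (reesCon I hI).mkMulHom
  have hF : F (malcevLR (a : WithOne S) b c m).1 = F (malcevLR (a : WithOne S) b c m).2 := by
    have h : (malcevLR (F a) (F b) (F ∘ c) m).1 = (malcevLR (F a) (F b) (F ∘ c) m).2 :=
      hQ a b (F ∘ c)
    simpa only [malcevLR_map, Prod.map_fst, Prod.map_snd] using h
  rcases (mapMulHom_reesCon_eq_iff hI).1 hF with h | ⟨hl, hr⟩
  · exact malcevLR_fst_eq_snd_of_le h (by omega)
  · obtain ⟨hl', hr'⟩ := malcevLR_mem_pow hI.image_coe_withOne hl hr k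
    exact (eq_of_mem_image_coe_pow hIn hl').trans (eq_of_mem_image_coe_pow hIn hr').symm

/-- If `I` is an ideal with `I^n = {θ}` and the Rees factor `S/I` is Malcev nilpotent,
then `S` is Malcev nilpotent. -/
theorem stmt_1 {S : Type*} [Semigroup S] (θ : S)
    (hθ : ∀ s : S, s * θ = θ ∧ θ * s = θ)
    (I : Set S) (hI : IsIdeal I) (hθI : θ ∈ I) (n : ℕ) (hn : 1 ≤ n)
    (hIn : ∀ f : Fin n → S, (∀ i, f i ∈ I) →
      (List.ofFn fun i => ((f i : S) : WithOne S)).prod = (θ : WithOne S))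
    (hq : MalcevNilpotent (reesCon I hI).Quotient) :
    MalcevNilpotent S :=
  stmt_1_general θ I hI n hn hIn hq
end

section
/- A group G is Malcev nilpotent of class n (as a semigroup) if and only if G is nilpotent of class n as a group. -/
/-!
Write `w_k = λ_k ρ_k⁻¹`. In a group, `w_{k+1} = ⁅w_k, ρ_k c_k⁆`, so `w_n` lies in the `n`-th term
of the lower central series, and `γ_n(G) = 1` forces `λ_n = ρ_n`. Conversely, unrolling the
recursion from the first step instead of the last gives `λ_{k+1}(x, y) = λ_k(x c₀ y, y c₀ x)`, and
`(x c₀ y)(y c₀ x)⁻¹ = ⁅x y⁻¹, y c₀⁆`, where `y c₀` ranges over all of `G`. By induction, the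
identity `λ_k = ρ_k` puts every `x y⁻¹` into the `k`-th term of the upper central series, so
`ζ_n(G) = G`, which is equivalent to `γ_n(G) = 1`. The adjoined identity of `S¹` adds nothing,
since `G` already has one.
-/

open scoped commutatorElement

lemma malcevLR_succ_eq_malcevLR_tail {α : Type*} [Mul α] (x y : α) (c : ℕ → α) (k : ℕ) :
    malcevLR x y c (k + 1) = malcevLR (x * c 0 * y) (y * c 0 * x) (fun i => c (i + 1)) k := by
  induction k with
  | zero => rfl
  | succ k ih => rw [malcevLR, ih]; rfl

section Monoid

variable {M : Type*} [Monoid M]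

lemma WithOne.mul_coe_eq_coe_lift_mul (x : WithOne M) (g : M) :
    x * (g : WithOne M) = ↑(WithOne.lift (MulHom.id M) x * g) := by
  induction x using WithOne.cases_on <;> simp

lemma malcevLR_coe_s5 (a b : M) (c : ℕ → WithOne M) (k : ℕ) :
    malcevLR (a : WithOne M) b c k =
      Prod.map (↑) (↑) (malcevLR a b (fun i => WithOne.lift (MulHom.id M) (c i)) k) := by
  induction k with
  | zero => rfl
  | succ k ih =>
    simp only [malcevLR, ih, Prod.map, WithOne.mul_coe_eq_coe_lift_mul, map_mul, WithOne.lift_coe,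
      MulHom.id_apply]

theorem malcevClassLe_iff_forall_malcevLR_eq {n : ℕ} :
    MalcevClassLe M n ↔
      ∀ (a b : M) (c : ℕ → M), (malcevLR a b c n).1 = (malcevLR a b c n).2 := by
  refine ⟨fun h a b c => ?_, fun h a b c => ?_⟩
  · simpa [malcevLR_coe_s5] using h a b (fun i => c i)
  · simp [malcevLR_coe_s5, h]

end Monoid

section Group

variable {G : Type*} [Group G]

lemma malcevLR_fst_mul_inv_snd_succ (a b : G) (c : ℕ → G) (k : ℕ) :
    (malcevLR a b c (k + 1)).1 * (malcevLR a b c (k + 1)).2⁻¹ =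
      ⁅(malcevLR a b c k).1 * (malcevLR a b c k).2⁻¹, (malcevLR a b c k).2 * c k⁆ := by
  simp only [malcevLR, commutatorElement_def]
  group

lemma malcevLR_fst_mul_inv_snd_mem_lowerCentralSeries (a b : G) (c : ℕ → G) (k : ℕ) :
    (malcevLR a b c k).1 * (malcevLR a b c k).2⁻¹ ∈ (⊤ : Subgroup G).lowerCentralSeries k := by
  induction k with
  | zero => exact Subgroup.mem_top _
  | succ k ih =>
    rw [malcevLR_fst_mul_inv_snd_succ]
    exact Subgroup.commutator_mem_commutator ih (Subgroup.mem_top _)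

lemma mul_inv_mem_upperCentralSeries_of_forall_malcevLR_eq {k : ℕ} {x y : G}
    (h : ∀ c : ℕ → G, (malcevLR x y c k).1 = (malcevLR x y c k).2) :
    x * y⁻¹ ∈ Subgroup.upperCentralSeries G k := by
  induction k generalizing x y with
  | zero => simp [show x = y from h fun _ => 1]
  | succ k ih =>
    refine Subgroup.mem_upperCentralSeries_succ_iff.mpr fun g => ?_
    have hcomm : (x * (y⁻¹ * g) * y) * (y * (y⁻¹ * g) * x)⁻¹ = ⁅x * y⁻¹, g⁆ := by
      rw [commutatorElement_def]; group
    simp_rw [malcevLR_succ_eq_malcevLR_tail] at h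
    exact hcomm ▸ ih fun c => h (Stream'.cons (y⁻¹ * g) c)

theorem malcevClassLe_iff_lowerCentralSeries_eq_bot (n : ℕ) :
    MalcevClassLe G n ↔ (⊤ : Subgroup G).lowerCentralSeries n = ⊥ := by
  rw [malcevClassLe_iff_forall_malcevLR_eq]
  refine ⟨fun h => ?_, fun h a b c => ?_⟩
  · rw [Subgroup.lowerCentralSeries_eq_bot_iff_upperCentralSeries_eq_top, eq_top_iff]
    intro x _
    simpa using mul_inv_mem_upperCentralSeries_of_forall_malcevLR_eq (y := 1) (h x 1)
  · have := malcevLR_fst_mul_inv_snd_mem_lowerCentralSeries a b c n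
    rwa [h, Subgroup.mem_bot, mul_inv_eq_one] at this

end Group

/-- A group is Malcev nilpotent of class `n` as a semigroup iff it is nilpotent of class `n`
as a group. -/
theorem stmt_5 {G : Type*} [Group G] (n : ℕ) :
    (MalcevClassLe G n ∧ ∀ m < n, ¬ MalcevClassLe G m) ↔
      ((⊤ : Subgroup G).lowerCentralSeries n = ⊥ ∧ ∀ m < n, (⊤ : Subgroup G).lowerCentralSeries m ≠ ⊥) := by
  simp only [malcevClassLe_iff_lowerCentralSeries_eq_bot, ne_eq]
end

section
/- Let P be an m × n matrix with entries in G ∪ {θ} (G a group). If some column of P contains two nonzero entries p_{i1,j} and p_{i2,j} with i1 ≠ i2, then the Rees matrix semigroup M^0(G, n, m; P) contains a subsemigroup isomorphic to the two-element right-zero semigroup; hence M^0(G, n, m; P) is not Malcev nilpotent. -/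
/-- If a column of the sandwich matrix `P` has two nonzero entries in distinct rows, then the
Rees matrix semigroup `M⁰(G, n, m; P)` contains a two-element right-zero subsemigroup, and
hence is not Malcev nilpotent. -/
theorem stmt_9 {S : Type*} [Semigroup S] {G : Type*} [Group G] {n m : ℕ}
    (θ : S) (hθ : ∀ s : S, s * θ = θ ∧ θ * s = θ)
    (P : Fin m → Fin n → Option G)
    (E : G → Fin n → Fin m → S)
    (hE : Function.Injective fun p : G × Fin n × Fin m => E p.1 p.2.1 p.2.2)
    (hθE : θ ∉ Set.range fun p : G × Fin n × Fin m => E p.1 p.2.1 p.2.2)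
    (hmul : ∀ g h i j k l, E g i j * E h k l =
      match P j k with
      | some p => E (g * p * h) i l
      | none => θ)
    (hcover : ∀ s : S, s = θ ∨ ∃ g i j, s = E g i j)
    (j : Fin n) (i₁ i₂ : Fin m) (hne : i₁ ≠ i₂)
    (p₁ p₂ : G) (h₁ : P i₁ j = some p₁) (h₂ : P i₂ j = some p₂) :
    (∃ x y : S, x ≠ y ∧ x * x = x ∧ y * y = y ∧ x * y = y ∧ y * x = x) ∧
      ¬ MalcevNilpotent S := by
  set x := E p₁⁻¹ j i₁ with hx
  set y := E p₂⁻¹ j i₂ with hy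
  have hxy : x ≠ y := by
    intro h
    have := hE (a₁ := (p₁⁻¹, j, i₁)) (a₂ := (p₂⁻¹, j, i₂)) h
    exact hne (congrArg (fun q : G × Fin n × Fin m => q.2.2) this)
  have mxx : x * x = x := by
    have := hmul p₁⁻¹ p₁⁻¹ j i₁ j i₁
    rw [h₁] at this; simpa [hx] using this
  have myy : y * y = y := by
    have := hmul p₂⁻¹ p₂⁻¹ j i₂ j i₂
    rw [h₂] at this; simpa [hy] using this
  have mxy : x * y = y := by
    have := hmul p₁⁻¹ p₂⁻¹ j i₁ j i₂
    rw [h₁] at this; simpa [hx, hy] using this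
  have myx : y * x = x := by
    have := hmul p₂⁻¹ p₁⁻¹ j i₂ j i₁
    rw [h₂] at this; simpa [hx, hy] using this
  refine ⟨⟨x, y, hxy, mxx, myy, mxy, myx⟩, ?_⟩
  rintro ⟨N, hN1, hN⟩
  have key : ∀ k, 1 ≤ k →
      (malcevLR (x : WithOne S) (y : WithOne S) (fun _ => 1) k
        = ((y : WithOne S), (x : WithOne S)) ∨
       malcevLR (x : WithOne S) (y : WithOne S) (fun _ => 1) k
        = ((x : WithOne S), (y : WithOne S))) := by
    intro k hk
    induction k with
    | zero => omega
    | succ k ih =>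
      rcases Nat.eq_or_lt_of_le hk with h | h
      · left
        have : malcevLR (x : WithOne S) (y : WithOne S) (fun _ => 1) 0
            = ((x : WithOne S), (y : WithOne S)) := rfl
        have hk0 : k = 0 := by omega
        subst hk0
        show ((x : WithOne S) * 1 * y, (y : WithOne S) * 1 * x) = _
        simp [← WithOne.coe_mul, mxy, myx]
      · have hk1 : 1 ≤ k := by omega
        rcases ih hk1 with h' | h'
        · right
          show ((malcevLR _ _ _ k).1 * 1 * (malcevLR _ _ _ k).2,
                (malcevLR _ _ _ k).2 * 1 * (malcevLR _ _ _ k).1) = _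
          rw [h']
          simp [← WithOne.coe_mul, mxy, myx]
        · left
          show ((malcevLR _ _ _ k).1 * 1 * (malcevLR _ _ _ k).2,
                (malcevLR _ _ _ k).2 * 1 * (malcevLR _ _ _ k).1) = _
          rw [h']
          simp [← WithOne.coe_mul, mxy, myx]
  have hEq := hN x y (fun _ => 1)
  have hcoe : (x : WithOne S) ≠ (y : WithOne S) := by
    simpa using fun h => hxy (WithOne.coe_inj.mp h)
  rcases key N hN1 with h | h <;> rw [h] at hEq <;> simp_all
end

section
/- Let S be a finite semigroup with ideal M = M^0(G, n, n; I_n) and representation Γ. Define Ψ(s): {1,...,n} ∪ {θ} → G ∪ {θ} by Ψ(s)(i) = g if Γ(s)(i) ≠ θ and s(1_G; i, j) = (g; Γ(s)(i), j) for some j, and Ψ(s)(i) = θ otherwise. Then Ψ is well-defined and satisfies the cocycle identity Ψ(st)(i) = Ψ(s)(Γ(t)(i)) · Ψ(t)(i) whenever Γ(st)(i) ≠ θ. -/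
/-- The twisting map `Ψ` is well defined and satisfies the cocycle identity
`Ψ(st)(i) = Ψ(s)(Γ(t)(i)) · Ψ(t)(i)` whenever `Γ(st)(i) ≠ θ`. -/
theorem stmt_14 {S : Type*} [Semigroup S] [Finite S] {G : Type*} [Group G] {n : ℕ}
    (θ : S) (E : G → Fin n → Fin n → S) (h : IsReesIdeal θ E)
    (Γ : S → Option (Fin n) → Option (Fin n))
    (hΓ : ∀ s i i', Γ s (some i) = some i' ↔ ∃ g g' j, s * E g i j = E g' i' j)
    (hΓθ : ∀ s, Γ s none = none)
    (hΓmul : ∀ (s t : S) (x : Option (Fin n)), Γ (s * t) x = Γ s (Γ t x)) :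
    ∃ Ψ : S → Option (Fin n) → WithZero G,
      (∀ s : S, Ψ s none = 0) ∧
      (∀ (s : S) (i : Fin n) (g : G),
        Ψ s (some i) = (g : WithZero G) ↔
          ∃ i' j, Γ s (some i) = some i' ∧ s * E 1 i j = E g i' j) ∧
      (∀ (s t : S) (i : Fin n), Γ (s * t) (some i) ≠ none →
        Ψ (s * t) (some i) = Ψ s (Γ t (some i)) * Ψ t (some i)) := by

  obtain ⟨hθ, hEinj, hθnr, hmul, habs⟩ := h
  have Einj : ∀ {g g' : G} {i i' j j' : Fin n}, E g i j = E g' i' j' →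
      g = g' ∧ i = i' ∧ j = j' := by
    intro g g' i i' j j' he
    have := hEinj (a₁ := (g, i, j)) (a₂ := (g', i', j')) he
    simpa [Prod.ext_iff] using this
  have key : ∀ (s : S) (g : G) (i i' j : Fin n), s * E 1 i j = E g i' j →
      ∀ k, s * E 1 i k = E g i' k := by
    intro s g i i' j hs k
    have h1 : E (1:G) i k = E 1 i j * E 1 j k := by rw [hmul]; simp
    rw [h1, ← mul_assoc, hs, hmul]; simp
  have norm : ∀ (s : S) (g g' : G) (i i' j : Fin n), s * E g i j = E g' i' j →
      s * E 1 i j = E (g' * g⁻¹) i' j := by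
    intro s g g' i i' j hs
    have h1 : E (1:G) i j = E g i j * E g⁻¹ j j := by rw [hmul]; simp
    rw [h1, ← mul_assoc, hs, hmul]; simp
  have uniq : ∀ (s : S) (i : Fin n) (g1 g2 : G) (i1 i2 j1 j2 : Fin n),
      Γ s (some i) = some i1 → s * E 1 i j1 = E g1 i1 j1 →
      Γ s (some i) = some i2 → s * E 1 i j2 = E g2 i2 j2 → g1 = g2 := by
    intro s i g1 g2 i1 i2 j1 j2 h1 e1 h2 e2
    have hi : i1 = i2 := by rw [h1] at h2; exact Option.some.inj h2
    subst hi
    have := key s g1 i i1 j1 e1 j2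
    rw [e2] at this
    exact (Einj this).1.symm
  classical
  refine ⟨fun s x => match x with
    | none => 0
    | some i =>
      if hx : ∃ g : G, ∃ i' j, Γ s (some i) = some i' ∧ s * E 1 i j = E g i' j
      then ((hx.choose : G) : WithZero G) else 0, fun s => rfl, ?_, ?_⟩
  case refine_1 =>
    intro s i g
    simp only
    constructor
    · intro hv
      split_ifs at hv with hx
      · obtain ⟨i', j, h1, h2⟩ := hx.choose_spec
        have : hx.choose = g := WithZero.coe_inj.mp hv
        exact ⟨i', j, h1, this ▸ h2⟩
      · exact absurd hv (by simp)
    · rintro ⟨i', j, h1, h2⟩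
      have hx : ∃ g : G, ∃ i' j, Γ s (some i) = some i' ∧ s * E 1 i j = E g i' j :=
        ⟨g, i', j, h1, h2⟩
      rw [dif_pos hx]
      obtain ⟨i'', j', h1', h2'⟩ := hx.choose_spec
      exact_mod_cast uniq s i hx.choose g i'' i' j' j h1' h2' h1 h2
  case refine_2 =>
    intro s t i hne
    have hchar : ∀ (s : S) (i : Fin n) (g : G),
        (if hx : ∃ g : G, ∃ i' j, Γ s (some i) = some i' ∧ s * E 1 i j = E g i' j
          then ((hx.choose : G) : WithZero G) else 0) = (g : WithZero G) ↔
          ∃ i' j, Γ s (some i) = some i' ∧ s * E 1 i j = E g i' j := by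
      intro s i g
      constructor
      · intro hv
        split_ifs at hv with hx
        · obtain ⟨i', j, h1, h2⟩ := hx.choose_spec
          have : hx.choose = g := WithZero.coe_inj.mp hv
          exact ⟨i', j, h1, this ▸ h2⟩
        · exact absurd hv (by simp)
      · rintro ⟨i', j, h1, h2⟩
        have hx : ∃ g : G, ∃ i' j, Γ s (some i) = some i' ∧ s * E 1 i j = E g i' j :=
          ⟨g, i', j, h1, h2⟩
        rw [dif_pos hx]
        obtain ⟨i'', j', h1', h2'⟩ := hx.choose_spec
        exact_mod_cast uniq s i hx.choose g i'' i' j' j h1' h2' h1 h2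
    -- Γ t (some i) = some k
    obtain ⟨k, hk⟩ : ∃ k, Γ t (some i) = some k := by
      rcases ht : Γ t (some i) with _ | k
      · exfalso; apply hne; rw [hΓmul, ht, hΓθ]
      · exact ⟨k, rfl⟩
    obtain ⟨g, g', j, hgj⟩ := (hΓ t i k).mp hk
    have ht1 : t * E 1 i j = E (g' * g⁻¹) k j := norm t g g' i k j hgj
    set a := g' * g⁻¹ with ha
    obtain ⟨i'', hi''⟩ : ∃ i'', Γ s (some k) = some i'' := by
      rcases hs : Γ s (some k) with _ | i''
      · exfalso; apply hne; rw [hΓmul, hk, hs]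
      · exact ⟨i'', rfl⟩
    obtain ⟨p, p', j', hpj⟩ := (hΓ s k i'').mp hi''
    have hs1 : s * E 1 k j = E (p' * p⁻¹) i'' j :=
      key s (p' * p⁻¹) k i'' j' (norm s p p' k i'' j' hpj) j
    set b := p' * p⁻¹ with hb
    have hst : (s * t) * E 1 i j = E (b * a) i'' j := by
      have e1 : E a k j = E 1 k j * E a j j := by rw [hmul]; simp
      rw [mul_assoc, ht1, e1, ← mul_assoc, hs1, hmul]; simp
    have hΓst : Γ (s * t) (some i) = some i'' := by rw [hΓmul, hk, hi'']
    calc (if hx : ∃ g : G, ∃ i' j, Γ (s * t) (some i) = some i' ∧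
            (s * t) * E 1 i j = E g i' j
          then ((hx.choose : G) : WithZero G) else 0)
        = ((b * a : G) : WithZero G) := (hchar (s*t) i (b*a)).mpr ⟨i'', j, hΓst, hst⟩
      _ = ((b : G) : WithZero G) * ((a : G) : WithZero G) := by
          rw [WithZero.coe_mul]
      _ = _ := by
          rw [hk]
          congr 1
          · exact ((hchar s k b).mpr ⟨i'', j, hi'', hs1⟩).symm
          · exact ((hchar t i a).mpr ⟨k, j, hk, ht1⟩).symm
end

section
/- Let S = M^0(G, 3, 3; I_3) ∪ ⟨w_1, w_2⟩ be a finite semigroup that is the union of the ideal M = M^0(G, 3, 3; I_3) (G a nilpotent group, θ the common zero) and the subsemigroup T = ⟨w_1, w_2⟩, where under the induced representation Γ(w_1) = (2,1,3,θ) (i.e., Γ(w_1): 2 ↦ 1, 1 ↦ 3, 3 ↦ θ) and Γ(w_2) = (2,3,θ)(1) (i.e., 2 ↦ 3, 3 ↦ θ, 1 ↦ 1), and w_2 w_1^2 = w_1^2 w_2 = w_1^3 = w_2 w_1 w_2 = θ. Then S is not Malcev nilpotent. -/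
/-- The semigroup `S = M⁰(G,3,3;I₃) ∪ ⟨w₁, w₂⟩` with `Γ(w₁) = (2,1,3,θ)`,
`Γ(w₂) = (2,3,θ)(1)` and `w₂w₁² = w₁²w₂ = w₁³ = w₂w₁w₂ = θ` is not Malcev nilpotent. -/
theorem stmt_15 {S : Type*} [Semigroup S] [Finite S] {G : Type*} [Group G]
    [Group.IsNilpotent G]
    (θ : S) (E : G → Fin 3 → Fin 3 → S) (h : IsReesIdeal θ E)
    (w₁ w₂ : S)
    (hrel : w₂ * (w₁ * w₁) = θ ∧ (w₁ * w₁) * w₂ = θ ∧ w₁ * (w₁ * w₁) = θ ∧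
      w₂ * w₁ * w₂ = θ)
    (Γ : S → Option (Fin 3) → Option (Fin 3))
    (hΓ : ∀ s i i', Γ s (some i) = some i' ↔ ∃ g g' j, s * E g i j = E g' i' j)
    (hΓθ : ∀ s, Γ s none = none)
    (hw₁ : Γ w₁ (some 1) = some 0 ∧ Γ w₁ (some 0) = some 2 ∧ Γ w₁ (some 2) = none)
    (hw₂ : Γ w₂ (some 1) = some 2 ∧ Γ w₂ (some 2) = none ∧ Γ w₂ (some 0) = some 0)
    (hcover : ∀ s : S, s ∈ reesIdealSet θ E ∨ s ∈ Subsemigroup.closure {w₁, w₂}) :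
    ¬ MalcevNilpotent S := by
  obtain ⟨hθ, hinj, hθr, hmul, -⟩ := h
  have act : ∀ s (i i' : Fin 3), Γ s (some i) = some i' → ∀ (g : G) (j : Fin 3),
      ∃ g', s * E g i j = E g' i' j := by
    intro s i i' hs g j
    obtain ⟨g₀, g₀', j₀, he⟩ := (hΓ s i i').1 hs
    refine ⟨g₀' * (g₀⁻¹ * g), ?_⟩
    have h1 : E g i j = E g₀ i j₀ * E (g₀⁻¹ * g) j₀ j := by
      rw [hmul, if_pos rfl, mul_inv_cancel_left]
    rw [h1, ← mul_assoc, he, hmul, if_pos rfl]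
  rintro ⟨n, hn, hcl⟩
  set a := E 1 1 2 with ha
  set b := E 1 0 0 with hb
  set z : ℕ → WithOne S := fun k => if Even k then (w₁ : WithOne S) else (w₂ : WithOne S)
    with hz
  have key : ∀ m, ∃ g h : G,
      (malcevLR (a : WithOne S) b z m).1 =
        ((E g 1 (if Even m then 2 else 0) : S) : WithOne S) ∧
      (malcevLR (a : WithOne S) b z m).2 =
        ((E h 0 (if Even m then 0 else 2) : S) : WithOne S) := by
    intro m
    induction m with
    | zero => exact ⟨1, 1, by simp [malcevLR, ha], by simp [malcevLR, hb]⟩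
    | succ k ih =>
      obtain ⟨g, h', hL, hR⟩ := ih
      have hk1 : ¬ Even (k + 1) ∨ Even (k + 1) := em' _
      by_cases hk : Even k
      · have hk1 : ¬ Even (k + 1) := by simp [Nat.even_add_one, hk]
        rw [if_pos hk] at hL hR
        obtain ⟨h₂, eh₂⟩ := act w₁ 0 2 hw₁.2.1 h' 0
        obtain ⟨g₂, eg₂⟩ := act w₁ 1 0 hw₁.1 g 2
        refine ⟨g * h₂, h' * g₂, ?_, ?_⟩
        · show (malcevLR _ _ z k).1 * z k * (malcevLR _ _ z k).2 = _
          rw [hL, hR, hz]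
          simp only [if_pos hk, if_neg hk1]
          rw [← WithOne.coe_mul, ← WithOne.coe_mul, WithOne.coe_inj,
            mul_assoc, eh₂, hmul, if_pos rfl]
        · show (malcevLR _ _ z k).2 * z k * (malcevLR _ _ z k).1 = _
          rw [hL, hR, hz]
          simp only [if_pos hk, if_neg hk1]
          rw [← WithOne.coe_mul, ← WithOne.coe_mul, WithOne.coe_inj,
            mul_assoc, eg₂, hmul, if_pos rfl]
      · have hk1 : Even (k + 1) := by simp [Nat.even_add_one, hk]
        rw [if_neg hk] at hL hR
        obtain ⟨h₂, eh₂⟩ := act w₂ 0 0 hw₂.2.2 h' 2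
        obtain ⟨g₂, eg₂⟩ := act w₂ 1 2 hw₂.1 g 0
        refine ⟨g * h₂, h' * g₂, ?_, ?_⟩
        · show (malcevLR _ _ z k).1 * z k * (malcevLR _ _ z k).2 = _
          rw [hL, hR, hz]
          simp only [if_neg hk, if_pos hk1]
          rw [← WithOne.coe_mul, ← WithOne.coe_mul, WithOne.coe_inj,
            mul_assoc, eh₂, hmul, if_pos rfl]
        · show (malcevLR _ _ z k).2 * z k * (malcevLR _ _ z k).1 = _
          rw [hL, hR, hz]
          simp only [if_neg hk, if_pos hk1]
          rw [← WithOne.coe_mul, ← WithOne.coe_mul, WithOne.coe_inj,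
            mul_assoc, eg₂, hmul, if_pos rfl]
  obtain ⟨g, h', hL, hR⟩ := key n
  have := hcl a b z
  rw [hL, hR, WithOne.coe_inj] at this
  have h2 : (fun p : G × Fin 3 × Fin 3 => E p.1 p.2.1 p.2.2)
      (g, 1, if Even n then 2 else 0) =
      (fun p : G × Fin 3 × Fin 3 => E p.1 p.2.1 p.2.2)
      (h', 0, if Even n then 0 else 2) := this
  have := hinj h2
  simp [Prod.ext_iff] at this
end

section
/- Let S be a finite minimal non-nilpotent semigroup with a proper ideal M = M^0(G, n, n; I_n), G a nilpotent group, n ≥ 2, with associated representation Γ. Then there exist elements w_1, w_2 ∈ S \ M and pairwise distinct indices l, m, m', k, k' in {1,...,n} such that one of the following holds: (i) Γ(w_1) swaps m and l, and Γ(w_2) fixes both m and l; (ii) Γ(w_1) sends m ↦ l ↦ m' and Γ(w_2) fixes l and sends m ↦ m'; (iii) Γ(w_1) sends k ↦ m and l ↦ k', while Γ(w_2) sends l ↦ m and k ↦ k'. -/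
/-!
A finite non-nilpotent semigroup carries a Malcev cycle: `x ≠ y` and interlacing elements
`w_t` with `(λ_m, ρ_m) = (x, y)`. The Rees quotient `S / M` is nilpotent, so the cycle collapses
there and `x, y ∈ M`; they are nonzero because `θ` is absorbing, say `x = (g; i, j)` and
`y = (g₂; k, l)`. If `i = k`, multiplying every `w_t` on the right by `(1; i, i)` does not change
the cycle and moves it into the proper, hence nilpotent, subsemigroup `M`, forcing `x = y`.
So `i ≠ k`, and the first two steps of the cycle stay nonzero only if `w_0` sends the rows
`k, i` to `j, l` and `w_1` sends them to `l, j` (or `w_t = 1` and the indices match). A case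
analysis on the coincidences among `i, j, k, l` yields the three configurations.
-/

section Malcev

variable {α : Type*} [Mul α]

theorem malcevLR_succ (x y : α) (c : ℕ → α) (n : ℕ) :
    malcevLR x y c (n + 1) = ((malcevLR x y c n).1 * c n * (malcevLR x y c n).2,
      (malcevLR x y c n).2 * c n * (malcevLR x y c n).1) := rfl

theorem malcevLR_add_s17 (x y : α) (c : ℕ → α) (s : ℕ) :
    ∀ t, malcevLR x y c (s + t) =
      malcevLR (malcevLR x y c s).1 (malcevLR x y c s).2 (fun r => c (s + r)) t
  | 0 => rfl
  | t + 1 => by rw [← add_assoc, malcevLR_succ, malcevLR_succ, malcevLR_add_s17 x y c s t]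

theorem malcevLR_congr_s17 (x y : α) {c c' : ℕ → α} :
    ∀ n, (∀ t < n, c t = c' t) → malcevLR x y c n = malcevLR x y c' n
  | 0, _ => rfl
  | n + 1, hc => by
    rw [malcevLR_succ, malcevLR_succ, malcevLR_congr_s17 x y n fun t ht => hc t (by omega),
      hc n n.lt_succ_self]

theorem malcevLR_map_s17 {β F : Type*} [Mul β] [FunLike F α β] [MulHomClass F α β]
    (f : F) (x y : α) (c : ℕ → α) :
    ∀ n, malcevLR (f x) (f y) (fun t => f (c t)) n =
      (f (malcevLR x y c n).1, f (malcevLR x y c n).2)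
  | 0 => rfl
  | n + 1 => by simp only [malcevLR_succ, malcevLR_map_s17 f x y c n, map_mul]

theorem malcevLR_fst_eq_snd_of_le_s17 {x y : α} {c : ℕ → α} {n n' : ℕ} (hn : n ≤ n')
    (h : (malcevLR x y c n).1 = (malcevLR x y c n).2) :
    (malcevLR x y c n').1 = (malcevLR x y c n').2 := by
  induction n', hn using Nat.le_induction with
  | base => exact h
  | succ k _ ih => simp only [malcevLR_succ, ih]

theorem malcevLR_mod_mul {x y : α} {c : ℕ → α} {m : ℕ} (hc : malcevLR x y c m = (x, y)) :
    ∀ q, malcevLR x y (fun t => c (t % m)) (q * m) = (x, y)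
  | 0 => by rw [zero_mul]; rfl
  | q + 1 => by
    rw [add_one_mul, malcevLR_add_s17, malcevLR_mod_mul hc q]
    refine (malcevLR_congr_s17 x y m fun t ht => ?_).trans hc
    rw [Nat.mul_comm q m, Nat.mul_add_mod, Nat.mod_eq_of_lt ht]

theorem malcevLR_succ_eq_of_absorbing {z : α} (hz : ∀ a, z * a = z ∧ a * z = z)
    {x y : α} {c : ℕ → α} {t : ℕ}
    (ht : (malcevLR x y c t).1 = z ∨ (malcevLR x y c t).2 = z) :
    malcevLR x y c (t + 1) = (z, z) := by
  rcases ht with ht | ht <;> simp [malcevLR_succ, ht, hz]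

theorem malcevLR_eq_of_absorbing {z : α} (hz : ∀ a, z * a = z ∧ a * z = z)
    {x y : α} {c : ℕ → α} {t s : ℕ}
    (ht : (malcevLR x y c t).1 = z ∨ (malcevLR x y c t).2 = z) (hs : t < s) :
    malcevLR x y c s = (z, z) := by
  induction s, hs using Nat.le_induction with
  | base => exact malcevLR_succ_eq_of_absorbing hz ht
  | succ k _ ih => exact malcevLR_succ_eq_of_absorbing hz (Or.inl (by rw [ih]))

theorem malcevLR_ne_of_cycle {z : α} (hz : ∀ a, z * a = z ∧ a * z = z)
    {x y : α} {c : ℕ → α} {m : ℕ} (hxy : x ≠ y) (hm : 0 < m)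
    (hcyc : malcevLR x y c m = (x, y)) {t : ℕ} (ht : t ≤ m) :
    (malcevLR x y c t).1 ≠ z ∧ (malcevLR x y c t).2 ≠ z := by
  have key : ∀ t' < m, ¬((malcevLR x y c t').1 = z ∨ (malcevLR x y c t').2 = z) := by
    intro t' ht' hz'
    have h := malcevLR_eq_of_absorbing hz hz' ht'
    rw [hcyc, Prod.mk.injEq] at h
    exact hxy (h.1.trans h.2.symm)
  rcases ht.lt_or_eq with ht | rfl
  · simpa only [not_or] using key t ht
  · rw [hcyc]
    exact not_or.mp (key 0 hm)

end Malcev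

section MalcevSemigroup

variable {α : Type*} [Semigroup α]

theorem malcevLR_mul_left_fixed {e x y : α} (hx : e * x = x) (hy : e * y = y) (c : ℕ → α) :
    ∀ t, e * (malcevLR x y c t).1 = (malcevLR x y c t).1 ∧
      e * (malcevLR x y c t).2 = (malcevLR x y c t).2
  | 0 => ⟨hx, hy⟩
  | t + 1 => by
    obtain ⟨h1, h2⟩ := malcevLR_mul_left_fixed hx hy c t
    simp only [malcevLR_succ, ← mul_assoc, h1, h2, and_self]

theorem malcevLR_mul_right_interlace {e x y : α} (hx : e * x = x) (hy : e * y = y)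
    (c : ℕ → α) : ∀ t, malcevLR x y (fun t => c t * e) t = malcevLR x y c t
  | 0 => rfl
  | t + 1 => by
    obtain ⟨h1, h2⟩ := malcevLR_mul_left_fixed hx hy c t
    simp only [malcevLR_succ, malcevLR_mul_right_interlace hx hy c t, mul_assoc, h1, h2]

end MalcevSemigroup

section Nilpotent

variable {S : Type*} [Semigroup S]

theorem exists_malcevLR_eq_coe (a b : S) (c : ℕ → WithOne S) :
    ∀ n, ∃ p q : S, malcevLR (a : WithOne S) b c n = (↑p, ↑q)
  | 0 => ⟨a, b, rfl⟩
  | n + 1 => by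
    obtain ⟨p, q, hpq⟩ := exists_malcevLR_eq_coe a b c n
    rw [malcevLR_succ, hpq]
    induction c n with
    | one => exact ⟨p * q, q * p, by simp⟩
    | coe u => exact ⟨p * u * q, q * u * p, by simp⟩

theorem MalcevNilpotent.eq_of_cycle (hS : MalcevNilpotent S) {x y : S} {c : ℕ → WithOne S}
    {m : ℕ} (hm : 0 < m) (hcyc : malcevLR (x : WithOne S) y c m = (↑x, ↑y)) : x = y := by
  obtain ⟨N, -, hN⟩ := hS
  have h := malcevLR_fst_eq_snd_of_le_s17 (Nat.le_mul_of_pos_right N hm) (hN x y fun t => c (t % m))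
  rw [malcevLR_mod_mul hcyc] at h
  exact WithOne.coe_inj.mp h

theorem MalcevNilpotent.map_eq_of_cycle {T : Type*} [Semigroup T] (hT : MalcevNilpotent T)
    (f : S →ₙ* T) {x y : S} {c : ℕ → WithOne S} {m : ℕ} (hm : 0 < m)
    (hcyc : malcevLR (x : WithOne S) y c m = (↑x, ↑y)) : f x = f y := by
  refine hT.eq_of_cycle hm (c := fun t => WithOne.mapMulHom f (c t)) ?_
  have h := malcevLR_map_s17 (WithOne.mapMulHom f) (x : WithOne S) y c m
  rwa [hcyc] at h

theorem exists_malcev_cycle [Finite S] (hS : ¬ MalcevNilpotent S) :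
    ∃ (x y : S) (c : ℕ → WithOne S) (m : ℕ), x ≠ y ∧ 0 < m ∧
      malcevLR (x : WithOne S) y c m = (↑x, ↑y) := by
  have : Finite (WithOne S) := inferInstanceAs (Finite (Option S))
  let := Fintype.ofFinite (WithOne S × WithOne S)
  set N := Fintype.card (WithOne S × WithOne S)
  obtain ⟨a, b, c, hab⟩ : ∃ (a b : S) (c : ℕ → WithOne S),
      (malcevLR (a : WithOne S) b c (N + 1)).1 ≠ (malcevLR (a : WithOne S) b c (N + 1)).2 := by
    by_contra! h
    exact hS ⟨N + 1, by omega, h⟩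
  obtain ⟨p, q, hpq, heq⟩ := Fintype.exists_ne_map_eq_of_card_lt
    (fun t : Fin (N + 1) => malcevLR (a : WithOne S) b c t) (by simp [N])
  wlog hlt : p < q generalizing p q
  · exact this q p hpq.symm heq.symm (lt_of_le_of_ne (not_lt.mp hlt) hpq.symm)
  obtain ⟨x, y, hxy⟩ := exists_malcevLR_eq_coe a b c p
  refine ⟨x, y, fun r => c (p + r), q - p, fun h => hab ?_, by omega, ?_⟩
  · refine malcevLR_fst_eq_snd_of_le_s17 (n := p) (by omega) ?_
    rw [hxy, h]
  · have h := malcevLR_add_s17 (a : WithOne S) b c p (q - p)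
    rwa [Nat.add_sub_cancel' hlt.le, ← heq, hxy, eq_comm] at h

end Nilpotent

section Ideal

variable {S : Type*} [Semigroup S] {I : Set S}

def IsIdeal.toSubsemigroup (hI : IsIdeal I) : Subsemigroup S where
  carrier := I
  mul_mem' _ hb := (hI.2 _ _ hb).1

theorem IsIdeal.toSubsemigroup_ne_top (hI : IsIdeal I) (hIu : I ≠ Set.univ) :
    hI.toSubsemigroup ≠ ⊤ := fun h => hIu (by rw [← Subsemigroup.coe_top, ← h]; rfl)

/-- Right multiplication by a common left identity `e ∈ I` of `x` and `y` moves a cycle into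
the subsemigroup `I`. -/
theorem IsIdeal.eq_of_cycle (hI : IsIdeal I) (hIT : MalcevNilpotent hI.toSubsemigroup)
    {e x y : S} (he : e ∈ I) (hex : e * x = x) (hey : e * y = y) {c : ℕ → WithOne S}
    {m : ℕ} (hm : 0 < m) (hcyc : malcevLR (x : WithOne S) y c m = (↑x, ↑y)) : x = y := by
  set T := hI.toSubsemigroup
  have hce : ∀ t, ∃ s : T, ((s : S) : WithOne S) = c t * ↑e := fun t => by
    induction c t with
    | one => exact ⟨⟨e, he⟩, by simp⟩
    | coe u => exact ⟨⟨u * e, (hI.2 u e he).1⟩, by simp⟩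
  choose d hd using hce
  have hxI : x ∈ I := hex ▸ (hI.2 x e he).2
  have hyI : y ∈ I := hey ▸ (hI.2 y e he).2
  let ι : T →ₙ* S := MulMemClass.subtype T
  have hcycT : malcevLR ((⟨x, hxI⟩ : T) : WithOne T) (⟨y, hyI⟩ : T) (fun t => d t) m =
      (↑(⟨x, hxI⟩ : T), ↑(⟨y, hyI⟩ : T)) := by
    have hF := malcevLR_map_s17 (WithOne.mapMulHom ι) ((⟨x, hxI⟩ : T) : WithOne T) (⟨y, hyI⟩ : T)
      (fun t => d t) m
    have hinter := malcevLR_mul_right_interlace (e := (e : WithOne S)) (x := x) (y := y)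
      (by rw [← WithOne.coe_mul, hex]) (by rw [← WithOne.coe_mul, hey]) c m
    simp only [ι, WithOne.mapMulHom_coe, MulMemClass.coe_subtype, hd, hinter, hcyc] at hF
    have hinj := WithOne.mapMulHom_injective (f := ι) Subtype.val_injective
    exact Prod.ext (hinj (congrArg Prod.fst hF).symm) (hinj (congrArg Prod.snd hF).symm)
  exact congrArg Subtype.val (hIT.eq_of_cycle hm hcycT)

end Ideal

theorem exists_E_eq_of_mem_reesIdealSet {S G : Type*} {n : ℕ} {θ : S}
    {E : G → Fin n → Fin n → S} {x : S} (hx : x ∈ reesIdealSet θ E) (hx0 : x ≠ θ) :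
    ∃ g i j, E g i j = x := by
  rcases hx with ⟨⟨g, i, j⟩, hx⟩ | hx
  exacts [⟨g, i, j, hx⟩, absurd hx hx0]

section Rees

variable {S : Type*} [Semigroup S] {G : Type*} [Group G] {n : ℕ} {θ : S}
  {E : G → Fin n → Fin n → S}

/-- `Γ(s)(i) = i'` in the notation of the paper. -/
def RowMapsTo (E : G → Fin n → Fin n → S) (s : S) (i i' : Fin n) : Prop :=
  ∃ g g' j, s * E g i j = E g' i' j

namespace IsReesIdeal

theorem E_ne_zero (h : IsReesIdeal θ E) (g : G) (i j : Fin n) : E g i j ≠ θ :=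
  fun he => h.2.2.1 ⟨(g, i, j), he⟩

theorem E_inj (h : IsReesIdeal θ E) {g g' : G} {i j i' j' : Fin n}
    (he : E g i j = E g' i' j') : g = g' ∧ i = i' ∧ j = j' := by
  simpa [Prod.ext_iff] using h.2.1 (a₁ := (g, i, j)) (a₂ := (g', i', j')) he

theorem E_mul_E (h : IsReesIdeal θ E) (g g' : G) (i j k l : Fin n) :
    E g i j * E g' k l = if j = k then E (g * g') i l else θ :=
  h.2.2.2.1 g g' i j k l

theorem E_mul_E_self (h : IsReesIdeal θ E) (g g' : G) (i j l : Fin n) :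
    E g i j * E g' j l = E (g * g') i l := by
  rw [h.E_mul_E, if_pos rfl]

theorem E_mul_E_of_ne (h : IsReesIdeal θ E) {j k : Fin n} (hjk : j ≠ k) (g g' : G)
    (i l : Fin n) : E g i j * E g' k l = θ := by
  rw [h.E_mul_E, if_neg hjk]

theorem eq_of_E_mul_E_ne_zero (h : IsReesIdeal θ E) {g g' : G} {i j k l : Fin n}
    (hne : E g i j * E g' k l ≠ θ) : j = k :=
  by_contra fun hjk => hne (h.E_mul_E_of_ne hjk g g' i l)

theorem coe_zero_absorbing (h : IsReesIdeal θ E) (a : WithOne S) :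
    (θ : WithOne S) * a = θ ∧ a * (θ : WithOne S) = θ := by
  induction a with
  | one => simp
  | coe u => simp only [← WithOne.coe_mul, (h.1 u).1, (h.1 u).2, and_self]

theorem isIdeal (h : IsReesIdeal θ E) : IsIdeal (reesIdealSet θ E) := by
  refine ⟨⟨θ, Or.inr rfl⟩, fun s x hx => ?_⟩
  rcases hx with ⟨⟨g, i, j⟩, rfl⟩ | rfl
  · obtain ⟨hl, hr⟩ := h.2.2.2.2 s g i j
    constructor
    · rcases hl with he | ⟨g', i', j', he⟩ <;> rw [he]
      exacts [Or.inr rfl, Or.inl ⟨(g', i', j'), rfl⟩]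
    · rcases hr with he | ⟨g', i', j', he⟩ <;> rw [he]
      exacts [Or.inr rfl, Or.inl ⟨(g', i', j'), rfl⟩]
  · rw [(h.1 s).1, (h.1 s).2]
    exact ⟨Or.inr rfl, Or.inr rfl⟩

theorem reesIdealSet_nontrivial (h : IsReesIdeal θ E) (hn : 0 < n) :
    (reesIdealSet θ E).Nontrivial :=
  ⟨θ, Or.inr rfl, E 1 ⟨0, hn⟩ ⟨0, hn⟩, Or.inl ⟨(1, ⟨0, hn⟩, ⟨0, hn⟩), rfl⟩,
    (h.E_ne_zero _ _ _).symm⟩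

/-- Left multiplication preserves columns, since `E g i j = E g i j * E 1 j j`. -/
theorem mul_E_eq_or (h : IsReesIdeal θ E) (s : S) (g : G) (i j : Fin n) :
    s * E g i j = θ ∨ ∃ g' i', s * E g i j = E g' i' j := by
  refine (h.2.2.2.2 s g i j).1.imp_right fun ⟨g', i', j', he⟩ => ⟨g', i', ?_⟩
  obtain rfl : j' = j := by
    by_contra hj
    apply h.E_ne_zero g' i' j'
    rw [← h.E_mul_E_of_ne hj g' 1 i' j, ← he, mul_assoc, h.E_mul_E_self, mul_one]
  exact he

theorem exists_mul_E_eq_of_rowMapsTo (h : IsReesIdeal θ E) {s : S} {i i' : Fin n}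
    (hs : RowMapsTo E s i i') (g : G) (j : Fin n) : ∃ g', s * E g i j = E g' i' j := by
  obtain ⟨g₀, g₀', j₀, he⟩ := hs
  refine ⟨g₀' * (g₀⁻¹ * g), ?_⟩
  rw [← h.E_mul_E_self, ← he, mul_assoc, h.E_mul_E_self, mul_inv_cancel_left]

theorem rowMapsTo_mul (h : IsReesIdeal θ E) {s₁ s₂ : S} {p q r : Fin n}
    (h₁ : RowMapsTo E s₁ p q) (h₂ : RowMapsTo E s₂ q r) : RowMapsTo E (s₂ * s₁) p r := by
  obtain ⟨g₁, he₁⟩ := h.exists_mul_E_eq_of_rowMapsTo h₁ 1 p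
  obtain ⟨g₂, he₂⟩ := h.exists_mul_E_eq_of_rowMapsTo h₂ g₁ p
  exact ⟨1, g₂, p, by rw [mul_assoc, he₁, he₂]⟩

theorem eq_of_rowMapsTo (h : IsReesIdeal θ E) {s : S} {i₁ i₂ p : Fin n}
    (h₁ : RowMapsTo E s i₁ p) (h₂ : RowMapsTo E s i₂ p) : i₁ = i₂ := by
  obtain ⟨g₁, he₁⟩ := h.exists_mul_E_eq_of_rowMapsTo h₁ 1 i₁
  obtain ⟨g₂, he₂⟩ := h.exists_mul_E_eq_of_rowMapsTo h₂ 1 i₂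
  have hne : ∀ {i g}, s * E 1 i i = E g p i → E 1 i₁ p * s * E 1 i i ≠ θ := fun he => by
    rw [mul_assoc, he, h.E_mul_E_self]
    exact h.E_ne_zero _ _ _
  rcases (h.2.2.2.2 s 1 i₁ p).2 with hθ | ⟨g, q, r, hr⟩
  · exact absurd (by rw [hθ, (h.1 _).2]) (hne he₁)
  · rw [hr] at hne
    exact (h.eq_of_E_mul_E_ne_zero (hne he₁)).symm.trans (h.eq_of_E_mul_E_ne_zero (hne he₂))

theorem not_mem_of_rowMapsTo (h : IsReesIdeal θ E) {s : S} {p₁ p₂ q₁ q₂ : Fin n}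
    (hne : p₁ ≠ p₂) (h₁ : RowMapsTo E s p₁ q₁) (h₂ : RowMapsTo E s p₂ q₂) :
    s ∉ reesIdealSet θ E := by
  obtain ⟨g₁, he₁⟩ := h.exists_mul_E_eq_of_rowMapsTo h₁ 1 p₁
  obtain ⟨g₂, he₂⟩ := h.exists_mul_E_eq_of_rowMapsTo h₂ 1 p₂
  rintro (⟨⟨g, i, j⟩, rfl⟩ | rfl)
  · have hcol : ∀ {p q g'}, E g i j * E 1 p p = E g' q p → j = p := fun he =>
      h.eq_of_E_mul_E_ne_zero (he ▸ h.E_ne_zero _ _ _)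
    exact hne ((hcol he₁).symm.trans (hcol he₂))
  · exact h.E_ne_zero _ _ _ (he₁.symm.trans (h.1 _).2)

theorem coe_E_mul_mul_coe_E (h : IsReesIdeal θ E) {a b : G} {i c k d : Fin n} {w : WithOne S}
    (hne : (E a i c : WithOne S) * w * E b k d ≠ θ) :
    (∃ a', (E a i c : WithOne S) * w * E b k d = E a' i d) ∧
      (w = 1 ∧ c = k ∨ ∃ u : S, w = u ∧ RowMapsTo E u k c) := by
  induction w with
  | one =>
    rw [mul_one, ← WithOne.coe_mul] at hne ⊢
    obtain rfl := h.eq_of_E_mul_E_ne_zero fun he => hne (by rw [he])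
    exact ⟨⟨a * b, by rw [h.E_mul_E_self]⟩, Or.inl ⟨rfl, rfl⟩⟩
  | coe u =>
    rw [mul_assoc, ← WithOne.coe_mul, ← WithOne.coe_mul] at hne ⊢
    rcases h.mul_E_eq_or u b k d with hθ | ⟨b', k', hu⟩
    · rw [hθ, (h.1 _).1] at hne
      exact absurd rfl hne
    · rw [hu] at hne ⊢
      obtain rfl := h.eq_of_E_mul_E_ne_zero fun he => hne (by rw [he])
      exact ⟨⟨a * b', by rw [h.E_mul_E_self]⟩, Or.inr ⟨u, rfl, b, b', d, hu⟩⟩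

theorem E_malcev_step (h : IsReesIdeal θ E) {a b : G} {i c k d : Fin n} {w : WithOne S}
    (hl : (E a i c : WithOne S) * w * E b k d ≠ θ)
    (hr : (E b k d : WithOne S) * w * E a i c ≠ θ) :
    (∃ a', (E a i c : WithOne S) * w * E b k d = E a' i d) ∧
      (∃ b', (E b k d : WithOne S) * w * E a i c = E b' k c) ∧
      (c = k ∧ d = i ∨ ∃ u, RowMapsTo E u k c ∧ RowMapsTo E u i d) := by
  obtain ⟨hl', hwl⟩ := h.coe_E_mul_mul_coe_E hl
  obtain ⟨hr', hwr⟩ := h.coe_E_mul_mul_coe_E hr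
  refine ⟨hl', hr', ?_⟩
  rcases hwl with ⟨rfl, hck⟩ | ⟨u, rfl, hu⟩ <;> rcases hwr with ⟨hw, hdi⟩ | ⟨u', hw, hu'⟩
  · exact Or.inl ⟨hck, hdi⟩
  · exact absurd hw.symm WithOne.coe_ne_one
  · exact absurd hw WithOne.coe_ne_one
  · obtain rfl := WithOne.coe_inj.mp hw
    exact Or.inr ⟨u, hu, hu'⟩

/-- Read off from the first two steps of the cycle. -/
theorem cycle_rowMapsTo (h : IsReesIdeal θ E) {g g₂ : G} {i j k l : Fin n}
    {c : ℕ → WithOne S} {m : ℕ} (hik : i ≠ k) (hm : 0 < m)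
    (hcyc : malcevLR (E g i j : WithOne S) (E g₂ k l) c m = (↑(E g i j), ↑(E g₂ k l))) :
    j ≠ l ∧ (j = k ∧ l = i ∨ ∃ u, RowMapsTo E u k j ∧ RowMapsTo E u i l) ∧
      (l = k ∧ j = i ∨ ∃ u, RowMapsTo E u k l ∧ RowMapsTo E u i j) := by
  have hne := fun t (ht : t ≤ m) => malcevLR_ne_of_cycle h.coe_zero_absorbing
    (WithOne.coe_injective.ne fun he => hik (h.E_inj he).2.1) hm hcyc ht
  obtain ⟨⟨a₁, ha₁⟩, ⟨b₁, hb₁⟩, step₀⟩ := h.E_malcev_step (hne 1 hm).1 (hne 1 hm).2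
  have hjl : j ≠ l := by
    rintro rfl
    rcases step₀ with ⟨hjk, hji⟩ | ⟨u, hk, hi⟩
    exacts [hik (hji.symm.trans hjk), hik (h.eq_of_rowMapsTo hi hk)]
  have hm₂ : 2 ≤ m := by
    by_contra hm₂
    obtain rfl : m = 1 := by omega
    have hx₁ : (E g i j : WithOne S) * c 0 * E g₂ k l = E g i j := congrArg Prod.fst hcyc
    rw [ha₁] at hx₁
    exact hjl (h.E_inj (WithOne.coe_inj.mp hx₁)).2.2.symm
  have hne₂ := hne 2 hm₂
  have h₂ : malcevLR (E g i j : WithOne S) (E g₂ k l) c 2 =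
      (↑(E a₁ i l) * c 1 * ↑(E b₁ k j), ↑(E b₁ k j) * c 1 * ↑(E a₁ i l)) := by
    rw [malcevLR_succ, ← ha₁, ← hb₁]
    rfl
  rw [h₂] at hne₂
  obtain ⟨-, -, step₁⟩ := h.E_malcev_step hne₂.1 hne₂.2
  exact ⟨hjl, step₀, step₁⟩

end IsReesIdeal

end Rees

section ActionPattern

variable {S ι : Type*}

/-- The three configurations (i), (ii), (iii) of the partial maps `R w₁` and `R w₂`. -/
def ActionPattern (R : S → ι → ι → Prop) (w₁ w₂ : S) : Prop :=
  (∃ m l : ι, m ≠ l ∧ R w₁ m l ∧ R w₁ l m ∧ R w₂ m m ∧ R w₂ l l) ∨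
  (∃ m l m' : ι, m ≠ l ∧ m ≠ m' ∧ l ≠ m' ∧
    R w₁ m l ∧ R w₁ l m' ∧ R w₂ l l ∧ R w₂ m m') ∨
  (∃ k m l k' : ι, k ≠ m ∧ k ≠ l ∧ k ≠ k' ∧ m ≠ l ∧ m ≠ k' ∧ l ≠ k' ∧
    R w₁ k m ∧ R w₁ l k' ∧ R w₂ l m ∧ R w₂ k k')

variable {R : S → ι → ι → Prop}

theorem ActionPattern.not_mem {M : Set S}
    (hout : ∀ {s p p' q q'}, p ≠ p' → R s p q → R s p' q' → s ∉ M) {w₁ w₂ : S}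
    (hw : ActionPattern R w₁ w₂) : w₁ ∉ M ∧ w₂ ∉ M := by
  rcases hw with ⟨m, l, hml, h₁, h₂, h₃, h₄⟩ | ⟨m, l, m', hml, -, -, h₁, h₂, h₃, h₄⟩ |
    ⟨k, m, l, k', -, hkl, -, -, -, -, h₁, h₂, h₃, h₄⟩
  exacts [⟨hout hml h₁ h₂, hout hml h₃ h₄⟩, ⟨hout hml h₁ h₂, hout hml.symm h₃ h₄⟩,
    ⟨hout hkl h₁ h₂, hout hkl.symm h₃ h₄⟩]

variable [Mul S]

theorem actionPattern_mul_self (hmul : ∀ {s₁ s₂ p q r}, R s₁ p q → R s₂ q r → R (s₂ * s₁) p r)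
    {u : S} {i k : ι} (hik : i ≠ k) (h₁ : R u i k) (h₂ : R u k i) :
    ActionPattern R u (u * u) :=
  Or.inl ⟨i, k, hik, h₁, h₂, hmul h₁ h₂, hmul h₂ h₁⟩

theorem exists_actionPattern_of_eq (hmul : ∀ {s₁ s₂ p q r}, R s₁ p q → R s₂ q r → R (s₂ * s₁) p r)
    {u₀ u₁ : S} {i k l : ι} (hik : i ≠ k) (hil : i ≠ l)
    (h₀k : R u₀ k i) (h₀i : R u₀ i l) (h₁k : R u₁ k l) (h₁i : R u₁ i i) :
    ∃ w₁ w₂, ActionPattern R w₁ w₂ := by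
  by_cases hlk : l = k
  · subst hlk
    exact ⟨u₀, u₀ * u₀, actionPattern_mul_self hmul hik h₀i h₀k⟩
  · exact ⟨u₀, u₁, Or.inr (Or.inl ⟨k, i, l, hik.symm, Ne.symm hlk, hil, h₀k, h₀i, h₁i, h₁k⟩)⟩

/-- The case analysis is symmetric under `i ↔ k` and under `j ↔ l`, which reduces every
coincidence between `{i, k}` and `{j, l}` to `j = i`. -/
theorem exists_actionPattern_of_pair (hmul : ∀ {s₁ s₂ p q r}, R s₁ p q → R s₂ q r → R (s₂ * s₁) p r)
    {u₀ u₁ : S} {i j k l : ι} (hik : i ≠ k) (hjl : j ≠ l)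
    (h₀k : R u₀ k j) (h₀i : R u₀ i l) (h₁k : R u₁ k l) (h₁i : R u₁ i j) :
    ∃ w₁ w₂, ActionPattern R w₁ w₂ := by
  by_cases hji : j = i
  · subst hji
    exact exists_actionPattern_of_eq hmul hik hjl h₀k h₀i h₁k h₁i
  by_cases hjk : j = k
  · subst hjk
    exact exists_actionPattern_of_eq hmul hik.symm hjl h₁i h₁k h₀i h₀k
  by_cases hli : l = i
  · subst hli
    exact exists_actionPattern_of_eq hmul hik hjl.symm h₁k h₁i h₀k h₀i
  by_cases hlk : l = k
  · subst hlk
    exact exists_actionPattern_of_eq hmul hik.symm hjl.symm h₀i h₀k h₁i h₁k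
  exact ⟨u₀, u₁, Or.inr (Or.inr ⟨k, j, i, l, Ne.symm hjk, hik.symm, Ne.symm hlk, hji, hjl,
    Ne.symm hli, h₀k, h₀i, h₁i, h₁k⟩)⟩

theorem exists_actionPattern (hmul : ∀ {s₁ s₂ p q r}, R s₁ p q → R s₂ q r → R (s₂ * s₁) p r)
    {i j k l : ι} (hik : i ≠ k) (hjl : j ≠ l)
    (h₀ : j = k ∧ l = i ∨ ∃ u, R u k j ∧ R u i l)
    (h₁ : l = k ∧ j = i ∨ ∃ u, R u k l ∧ R u i j) :
    ∃ w₁ w₂, ActionPattern R w₁ w₂ := by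
  rcases h₀ with ⟨rfl, rfl⟩ | ⟨u₀, h₀k, h₀i⟩ <;> rcases h₁ with ⟨hlk, hji⟩ | ⟨u₁, h₁k, h₁i⟩
  · exact absurd hlk hik
  · exact ⟨u₁, u₁ * u₁, actionPattern_mul_self hmul hik h₁i h₁k⟩
  · subst hlk hji
    exact ⟨u₀, u₀ * u₀, actionPattern_mul_self hmul hik h₀i h₀k⟩
  · exact exists_actionPattern_of_pair hmul hik hjl h₀k h₀i h₁k h₁i

end ActionPattern

theorem stmt_17_general {S : Type*} [Semigroup S] [Finite S] {G : Type*} [Group G]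
    {n : ℕ} (hn : 2 ≤ n)
    (θ : S) (E : G → Fin n → Fin n → S) (h : IsReesIdeal θ E)
    (hproper : reesIdealSet θ E ≠ Set.univ)
    (hmin : MinimalNonNilpotent S)
    (Γ : S → Option (Fin n) → Option (Fin n))
    (hΓ : ∀ s i i', Γ s (some i) = some i' ↔ ∃ g g' j, s * E g i j = E g' i' j) :
    ∃ w₁ w₂ : S, w₁ ∉ reesIdealSet θ E ∧ w₂ ∉ reesIdealSet θ E ∧
      ((∃ m l : Fin n, m ≠ l ∧
          Γ w₁ (some m) = some l ∧ Γ w₁ (some l) = some m ∧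
          Γ w₂ (some m) = some m ∧ Γ w₂ (some l) = some l) ∨
       (∃ m l m' : Fin n, m ≠ l ∧ m ≠ m' ∧ l ≠ m' ∧
          Γ w₁ (some m) = some l ∧ Γ w₁ (some l) = some m' ∧
          Γ w₂ (some l) = some l ∧ Γ w₂ (some m) = some m') ∨
       (∃ k m l k' : Fin n, k ≠ m ∧ k ≠ l ∧ k ≠ k' ∧ m ≠ l ∧ m ≠ k' ∧ l ≠ k' ∧
          Γ w₁ (some k) = some m ∧ Γ w₁ (some l) = some k' ∧
          Γ w₂ (some l) = some m ∧ Γ w₂ (some k) = some k')) := by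
  obtain ⟨hnil, hsub, hquo⟩ := hmin
  obtain ⟨x, y, c, m, hxy, hm, hcyc⟩ := exists_malcev_cycle hnil
  have hxyM : x ∈ reesIdealSet θ E ∧ y ∈ reesIdealSet θ E := by
    let q : S →ₙ* (reesCon _ h.isIdeal).Quotient := ⟨(↑), fun _ _ => rfl⟩
    have hq := (hquo _ h.isIdeal (h.reesIdealSet_nontrivial (by omega))).map_eq_of_cycle q hm hcyc
    exact ((Con.eq _).mp hq).resolve_left hxy
  obtain ⟨hx0, hy0⟩ := malcevLR_ne_of_cycle h.coe_zero_absorbing (WithOne.coe_injective.ne hxy)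
    hm hcyc (Nat.zero_le m)
  obtain ⟨g, i, j, rfl⟩ := exists_E_eq_of_mem_reesIdealSet hxyM.1 fun hx => hx0 (by rw [hx]; rfl)
  obtain ⟨g₂, k, l, rfl⟩ := exists_E_eq_of_mem_reesIdealSet hxyM.2 fun hy => hy0 (by rw [hy]; rfl)
  have hik : i ≠ k := by
    rintro rfl
    refine hxy (h.isIdeal.eq_of_cycle (hsub _ (h.isIdeal.toSubsemigroup_ne_top hproper))
      (e := E 1 i i) (Or.inl ⟨(1, i, i), rfl⟩) ?_ ?_ hm hcyc) <;> rw [h.E_mul_E_self, one_mul]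
  obtain ⟨hjl, h₀, h₁⟩ := h.cycle_rowMapsTo hik hm hcyc
  obtain ⟨w₁, w₂, hw⟩ := exists_actionPattern h.rowMapsTo_mul hik hjl h₀ h₁
  have hΓR : (fun s i i' => Γ s (some i) = some i') = RowMapsTo E := by
    funext s i i'
    exact propext (hΓ s i i')
  obtain ⟨hw₁, hw₂⟩ := hw.not_mem fun hne h₁ h₂ => h.not_mem_of_rowMapsTo hne h₁ h₂
  refine ⟨w₁, w₂, hw₁, hw₂, ?_⟩
  show ActionPattern (fun s i i' => Γ s (some i) = some i') w₁ w₂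
  rwa [hΓR]

/-- In a finite minimal non-nilpotent semigroup with proper Rees ideal `M⁰(G,n,n;I_n)`,
there are `w₁, w₂ ∈ S \ M` whose images under `Γ` are of one of the three listed types. -/
theorem stmt_17 {S : Type*} [Semigroup S] [Finite S] {G : Type*} [Group G]
    [Group.IsNilpotent G] {n : ℕ} (hn : 2 ≤ n)
    (θ : S) (E : G → Fin n → Fin n → S) (h : IsReesIdeal θ E)
    (hproper : reesIdealSet θ E ≠ Set.univ)
    (hmin : MinimalNonNilpotent S)
    (Γ : S → Option (Fin n) → Option (Fin n))
    (hΓ : ∀ s i i', Γ s (some i) = some i' ↔ ∃ g g' j, s * E g i j = E g' i' j)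
    (hΓθ : ∀ s, Γ s none = none) :
    ∃ w₁ w₂ : S, w₁ ∉ reesIdealSet θ E ∧ w₂ ∉ reesIdealSet θ E ∧
      ((∃ m l : Fin n, m ≠ l ∧
          Γ w₁ (some m) = some l ∧ Γ w₁ (some l) = some m ∧
          Γ w₂ (some m) = some m ∧ Γ w₂ (some l) = some l) ∨
       (∃ m l m' : Fin n, m ≠ l ∧ m ≠ m' ∧ l ≠ m' ∧
          Γ w₁ (some m) = some l ∧ Γ w₁ (some l) = some m' ∧
          Γ w₂ (some l) = some l ∧ Γ w₂ (some m) = some m') ∨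
       (∃ k m l k' : Fin n, k ≠ m ∧ k ≠ l ∧ k ≠ k' ∧ m ≠ l ∧ m ≠ k' ∧ l ≠ k' ∧
          Γ w₁ (some k) = some m ∧ Γ w₁ (some l) = some k' ∧
          Γ w₂ (some l) = some m ∧ Γ w₂ (some k) = some k')) :=
  stmt_17_general hn θ E h hproper hmin Γ hΓ
end

section
/- Let G be a cyclic group of order 2 with elements {1, g}, and let S = M^0(G, 4, 4; I_4) ∪ {w, v, θ} with w^2 = v^2 = wv = vw = θ, where w acts on row indices by 4 ↦ 1, 3 ↦ 2 (all other indices to θ) with twisting Ψ(w)(4) = Ψ(w)(3) = 1, and v acts by 4 ↦ 2, 3 ↦ 1 (others to θ) with Ψ(v)(4) = 1, Ψ(v)(3) = g (i.e., w(h; 4, j) = (h; 1, j), w(h; 3, j) = (h; 2, j), v(h; 4, j) = (h; 2, j), v(h; 3, j) = (gh; 1, j), and the corresponding right actions; all other products with M are θ). Then S is not Malcev nilpotent. -/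
/-- The semigroup `S = M⁰(G,4,4;I₄) ∪ {w, v, θ}` (with `G` cyclic of order 2 and the
indicated twisted action of `w` and `v`) is not Malcev nilpotent.  Indices of
`{1,2,3,4}` are represented by `0,1,2,3 : Fin 4`. -/
theorem stmt_18 {S : Type*} [Semigroup S] [Finite S] {G : Type*} [Group G]
    (g : G) (hg : g ≠ 1) (hG : ∀ x : G, x = 1 ∨ x = g)
    (θ : S) (E : G → Fin 4 → Fin 4 → S) (h : IsReesIdeal θ E)
    (w v : S)
    (hrel : w * w = θ ∧ v * v = θ ∧ w * v = θ ∧ v * w = θ)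
    (hwl : ∀ (x : G) (j : Fin 4),
      w * E x 3 j = E x 0 j ∧ w * E x 2 j = E x 1 j ∧
      w * E x 0 j = θ ∧ w * E x 1 j = θ)
    (hvl : ∀ (x : G) (j : Fin 4),
      v * E x 3 j = E x 1 j ∧ v * E x 2 j = E (g * x) 0 j ∧
      v * E x 0 j = θ ∧ v * E x 1 j = θ)
    (hwr : ∀ (x : G) (i : Fin 4),
      E x i 0 * w = E x i 3 ∧ E x i 1 * w = E x i 2 ∧
      E x i 2 * w = θ ∧ E x i 3 * w = θ)
    (hvr : ∀ (x : G) (i : Fin 4),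
      E x i 1 * v = E x i 3 ∧ E x i 0 * v = E (x * g) i 2 ∧
      E x i 2 * v = θ ∧ E x i 3 * v = θ)
    (hcover : ∀ s : S, s = w ∨ s = v ∨ s = θ ∨ ∃ x i j, s = E x i j) :
    ¬ MalcevNilpotent S := by
  rintro ⟨n, -, hcls⟩
  obtain ⟨-, hinj, -, hmul, -⟩ := h
  set c : ℕ → WithOne S := fun k => if Even k then (v : WithOne S) else (w : WithOne S)
    with hc
  have key : ∀ k : ℕ, ∃ x y : G,
      (malcevLR ((E 1 3 0 : S) : WithOne S) ((E 1 2 1 : S) : WithOne S) c k).1 =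
        ((E x 3 (if Even k then 0 else 1) : S) : WithOne S) ∧
      (malcevLR ((E 1 3 0 : S) : WithOne S) ((E 1 2 1 : S) : WithOne S) c k).2 =
        ((E y 2 (if Even k then 1 else 0) : S) : WithOne S) := by
    intro k
    induction k with
    | zero => exact ⟨1, 1, rfl, rfl⟩
    | succ k ih =>
      obtain ⟨x, y, h1, h2⟩ := ih
      rcases Nat.even_or_odd k with hk | hk
      · have hk1 : ¬ Even (k + 1) := by simp [Nat.even_add_one, hk]
        refine ⟨x * g * y, y * x, ?_, ?_⟩
        · show _ * c k * _ = _
          rw [h1, h2, hc]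
          simp only [if_pos hk, if_neg hk1]
          rw [← WithOne.coe_mul, (hvr x 3).2.1, ← WithOne.coe_mul, hmul]
          norm_num
        · show _ * c k * _ = _
          rw [h1, h2, hc]
          simp only [if_pos hk, if_neg hk1]
          rw [← WithOne.coe_mul, (hvr y 2).1, ← WithOne.coe_mul, hmul]
          norm_num
      · have hk' : ¬ Even k := Nat.not_even_iff_odd.mpr hk
        have hk1 : Even (k + 1) := Nat.even_add_one.mpr hk'
        refine ⟨x * y, y * x, ?_, ?_⟩
        · show _ * c k * _ = _
          rw [h1, h2, hc]
          simp only [if_neg hk', if_pos hk1]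
          rw [← WithOne.coe_mul, (hwr x 3).2.1, ← WithOne.coe_mul, hmul]
          norm_num
        · show _ * c k * _ = _
          rw [h1, h2, hc]
          simp only [if_neg hk', if_pos hk1]
          rw [← WithOne.coe_mul, (hwr y 2).1, ← WithOne.coe_mul, hmul]
          norm_num
  obtain ⟨x, y, h1, h2⟩ := key n
  have heq := hcls (E 1 3 0) (E 1 2 1) c
  rw [h1, h2] at heq
  have hE : E x 3 (if Even n then 0 else 1) = E y 2 (if Even n then 1 else 0) :=
    WithOne.coe_inj.mp heq
  have hp : (x, (3 : Fin 4), (if Even n then (0:Fin 4) else 1)) =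
      (y, (2 : Fin 4), (if Even n then (1:Fin 4) else 0)) := hinj hE
  have h32 : (3 : Fin 4) = 2 := congrArg (fun p : G × Fin 4 × Fin 4 => p.2.1) hp
  exact absurd h32 (by decide)
end
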